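/- Fix n ≥ 1 and define G_n = Π_{k=1}^{⌊log₂ n⌋} Π_{i=1}^{⌊n/2^k⌋} (1+q^i). For a polynomial f(q) ∈ ℤ[q], G_n divides f(q) in ℤ[q] if and only if (1+q^m)^{⌊n/(2m)⌋} divides f(q) in ℤ[q] for all 1 ≤ m ≤ ⌊n/2⌋. -/

import Mathlib

/-!
Since `1 + q^i = (q^(2i) - 1) / (q^i - 1)`, it is the product of the cyclotomic polynomials
`Φ_(2d)` over the divisors `d` of `i` with `i / d` odd. Counting these, `∏_{i ≤ N} (1 + q^i)` is
`∏_{d ≤ N} Φ_(2d) ^ (⌊N/d⌋ - ⌊N/2d⌋)`, and the exponents telescope along `N = ⌊n/2^k⌋` to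
`G_n = ∏_{d ≤ n/2} Φ_(2d) ^ ⌊n/2d⌋`. Each `(1 + q^m) ^ ⌊n/2m⌋` divides this product, and
conversely each factor `Φ_(2d) ^ ⌊n/2d⌋` divides `(1 + q^d) ^ ⌊n/2d⌋`; the factors are pairwise
coprime over `ℚ` and `G_n` is monic, so divisibility by all of them gives divisibility in `ℤ[q]`.
-/

open Polynomial

/-- `G_n = Π_{k=1}^{⌊log₂ n⌋} Π_{i=1}^{⌊n/2^k⌋} (1+q^i)` -/
noncomputable def Gpoly (n : ℕ) : Polynomial ℤ :=
  ∏ k ∈ Finset.Icc 1 (Nat.log 2 n), ∏ i ∈ Finset.Icc 1 (n / 2 ^ k), (1 + Polynomial.X ^ i)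

open Finset

theorem Nat.divisors_two_mul_sdiff_divisors {i : ℕ} (hi : i ≠ 0) :
    (2 * i).divisors \ i.divisors = {d ∈ i.divisors | ¬ 2 * d ∣ i}.image (2 * ·) := by
  ext e
  simp only [mem_sdiff, Nat.mem_divisors, mem_image, mem_filter]
  constructor
  · rintro ⟨⟨he, -⟩, hei⟩
    obtain ⟨d, rfl⟩ : 2 ∣ e := by
      by_contra h
      have hodd : Nat.Coprime e 2 := Nat.coprime_two_right.mpr (Nat.odd_iff.mpr (by omega))
      exact hei ⟨hodd.dvd_of_dvd_mul_left he, hi⟩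
    exact ⟨d, ⟨⟨Nat.dvd_of_mul_dvd_mul_left two_pos he, hi⟩, fun h => hei ⟨h, hi⟩⟩, rfl⟩
  · rintro ⟨d, ⟨⟨hd, -⟩, hdi⟩, rfl⟩
    exact ⟨⟨mul_dvd_mul_left 2 hd, by omega⟩, fun h => hdi h.1⟩

theorem Nat.card_filter_dvd_not_two_mul_dvd (N d : ℕ) :
    #{i ∈ Icc 1 N | d ∣ i ∧ ¬ 2 * d ∣ i} = N / d - N / (2 * d) := by
  have hsub : {i ∈ Icc 1 N | 2 * d ∣ i} ⊆ {i ∈ Icc 1 N | d ∣ i} :=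
    monotone_filter_right _ fun _ _ h => (Nat.dvd_mul_left d 2).trans h
  have hIcc : Icc 1 N = Ioc 0 N := Icc_add_one_left_eq_Ioc 0 N
  rw [filter_and_not, card_sdiff_of_subset hsub, hIcc, Nat.Ioc_filter_dvd_card_eq_div,
    Nat.Ioc_filter_dvd_card_eq_div]

theorem one_add_X_pow_eq_prod_cyclotomic (R : Type*) [CommRing R] {i : ℕ} (hi : i ≠ 0) :
    (1 + X ^ i : R[X]) = ∏ d ∈ i.divisors with ¬ 2 * d ∣ i, cyclotomic (2 * d) R := by
  have h := X_pow_sub_one_mul_prod_cyclotomic_eq_X_pow_sub_one_of_dvd R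
    (Nat.dvd_mul_left i 2) (mul_ne_zero two_ne_zero hi)
  rw [Nat.divisors_two_mul_sdiff_divisors hi,
    prod_image fun _ _ _ _ h => Nat.eq_of_mul_eq_mul_left two_pos h] at h
  have hreg : IsLeftRegular (X ^ i - 1 : R[X]) := by
    simpa using (monic_X_pow_sub_C (1 : R) hi).isRegular.left
  apply hreg
  beta_reduce
  rw [h]
  ring

theorem prod_one_add_X_pow_eq_prod_cyclotomic (R : Type*) [CommRing R] (N : ℕ) :
    ∏ i ∈ Icc 1 N, (1 + X ^ i : R[X]) =
      ∏ d ∈ Icc 1 N, cyclotomic (2 * d) R ^ (N / d - N / (2 * d)) := by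
  calc ∏ i ∈ Icc 1 N, (1 + X ^ i : R[X])
      = ∏ i ∈ Icc 1 N, ∏ d ∈ i.divisors with ¬ 2 * d ∣ i, cyclotomic (2 * d) R :=
        prod_congr rfl fun i hi => one_add_X_pow_eq_prod_cyclotomic R (by simp at hi; omega)
    _ = ∏ d ∈ Icc 1 N, ∏ i ∈ Icc 1 N with d ∣ i ∧ ¬ 2 * d ∣ i, cyclotomic (2 * d) R := by
        refine prod_comm' fun i d => ?_
        simp only [mem_Icc, mem_filter, Nat.mem_divisors]
        constructor
        · rintro ⟨hi, ⟨hd, -⟩, h2d⟩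
          have := Nat.le_of_dvd (by omega) hd
          have := Nat.pos_of_dvd_of_pos hd (by omega)
          exact ⟨⟨hi, hd, h2d⟩, by omega, by omega⟩
        · rintro ⟨⟨hi, hd, h2d⟩, -⟩
          exact ⟨hi, ⟨hd, by omega⟩, h2d⟩
    _ = _ := by
        simp only [prod_const, Nat.card_filter_dvd_not_two_mul_dvd]

noncomputable def evenCyclotomicProd (R : Type*) [CommRing R] (N : ℕ) : R[X] :=
  ∏ d ∈ Icc 1 N, cyclotomic (2 * d) R ^ (N / d)

theorem prod_one_add_X_pow_mul_evenCyclotomicProd_div_two (R : Type*) [CommRing R] (N : ℕ) :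
    (∏ i ∈ Icc 1 N, (1 + X ^ i : R[X])) * evenCyclotomicProd R (N / 2) =
      evenCyclotomicProd R N := by
  have hhalf : evenCyclotomicProd R (N / 2) =
      ∏ d ∈ Icc 1 N, cyclotomic (2 * d) R ^ (N / (2 * d)) := by
    simp_rw [evenCyclotomicProd, Nat.div_div_eq_div_mul]
    refine prod_subset (Icc_subset_Icc_right (Nat.div_le_self N 2)) fun d hd hd' => ?_
    simp only [mem_Icc] at hd hd'
    rw [Nat.div_eq_of_lt (by omega), pow_zero]
  rw [prod_one_add_X_pow_eq_prod_cyclotomic, hhalf, evenCyclotomicProd, ← prod_mul_distrib]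
  refine prod_congr rfl fun d hd => ?_
  have : N / (2 * d) ≤ N / d := Nat.div_le_div_left (by omega) (by simp at hd; omega)
  rw [← pow_add, Nat.sub_add_cancel this]

theorem Gpoly_eq_mul (n : ℕ) : Gpoly n = (∏ i ∈ Icc 1 (n / 2), (1 + X ^ i)) * Gpoly (n / 2) := by
  rcases Nat.lt_or_ge n 2 with hn | hn
  · simp [Gpoly, Nat.log_of_lt hn, Nat.div_eq_of_lt hn]
  have hlog : Nat.log 2 n = Nat.log 2 (n / 2) + 1 := by
    have := Nat.log_pos one_lt_two hn
    rw [Nat.log_div_base]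
    omega
  rw [Gpoly, Gpoly, hlog, ← insert_Icc_add_one_left_eq_Icc (by omega), prod_insert (by simp),
    ← map_add_right_Icc, prod_map, pow_one]
  congr 1
  refine prod_congr rfl fun k _ => ?_
  rw [addRightEmbedding_apply, pow_succ', Nat.div_div_eq_div_mul]

theorem Gpoly_eq_evenCyclotomicProd (n : ℕ) : Gpoly n = evenCyclotomicProd ℤ (n / 2) := by
  induction n using Nat.strong_induction_on with
  | _ n ih =>
    rcases Nat.eq_zero_or_pos n with rfl | hn
    · simp [Gpoly, evenCyclotomicProd]
    rw [Gpoly_eq_mul, ih (n / 2) (by omega), prod_one_add_X_pow_mul_evenCyclotomicProd_div_two]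

theorem cyclotomic_two_mul_dvd_one_add_X_pow (R : Type*) [CommRing R] {d : ℕ} (hd : d ≠ 0) :
    cyclotomic (2 * d) R ∣ 1 + X ^ d := by
  rw [one_add_X_pow_eq_prod_cyclotomic R hd]
  refine dvd_prod_of_mem _ (mem_filter.mpr ⟨Nat.mem_divisors_self d hd, fun h => ?_⟩)
  have := Nat.le_of_dvd (Nat.pos_of_ne_zero hd) h
  omega

theorem one_add_X_pow_pow_dvd_evenCyclotomicProd (R : Type*) [CommRing R] {m N : ℕ}
    (hm : 1 ≤ m) (hmN : m ≤ N) : (1 + X ^ m : R[X]) ^ (N / m) ∣ evenCyclotomicProd R N := by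
  rw [one_add_X_pow_eq_prod_cyclotomic R (by omega), ← prod_pow, evenCyclotomicProd]
  have hdiv : ∀ d ∈ m.divisors, 1 ≤ d ∧ d ≤ m := fun d hd =>
    ⟨Nat.pos_of_mem_divisors hd, Nat.divisor_le hd⟩
  refine (prod_dvd_prod_of_dvd _ _ fun d hd => pow_dvd_pow _ ?_).trans
    (prod_dvd_prod_of_subset _ _ _ fun d hd => ?_)
  · obtain ⟨hd1, hdm⟩ := hdiv d (mem_filter.mp hd).1
    exact Nat.div_le_div_left hdm hd1
  · obtain ⟨hd1, hdm⟩ := hdiv d (mem_filter.mp hd).1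
    exact mem_Icc.mpr ⟨hd1, hdm.trans hmN⟩

theorem evenCyclotomicProd_dvd_of_forall {N : ℕ} {f : ℤ[X]}
    (h : ∀ d ∈ Icc 1 N, cyclotomic (2 * d) ℤ ^ (N / d) ∣ f) : evenCyclotomicProd ℤ N ∣ f := by
  have hmonic : (evenCyclotomicProd ℤ N).Monic :=
    monic_prod_of_monic _ _ fun d _ => (cyclotomic.monic _ ℤ).pow _
  rw [← map_dvd_map (Int.castRingHom ℚ) Int.cast_injective hmonic, evenCyclotomicProd,
    Polynomial.map_prod]
  refine prod_dvd_of_coprime (fun a _ b _ hab => ?_) fun d hd => ?_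
  · simp only [Function.onFun, Polynomial.map_pow, map_cyclotomic]
    exact (cyclotomic.isCoprime_rat (by omega)).pow
  · simpa only [Polynomial.map_pow, map_cyclotomic] using
      Polynomial.map_dvd (Int.castRingHom ℚ) (h d hd)

theorem evenCyclotomicProd_dvd_iff (N : ℕ) (f : ℤ[X]) :
    evenCyclotomicProd ℤ N ∣ f ↔ ∀ m, 1 ≤ m → m ≤ N → (1 + X ^ m : ℤ[X]) ^ (N / m) ∣ f := by
  refine ⟨fun h m hm hmN => (one_add_X_pow_pow_dvd_evenCyclotomicProd ℤ hm hmN).trans h,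
    fun h => evenCyclotomicProd_dvd_of_forall fun d hd => ?_⟩
  obtain ⟨hd1, hdN⟩ := mem_Icc.mp hd
  exact (pow_dvd_pow_of_dvd (cyclotomic_two_mul_dvd_one_add_X_pow ℤ (by omega)) _).trans
    (h d hd1 hdN)

theorem stmt11_general (n : ℕ) (f : Polynomial ℤ) :
    Gpoly n ∣ f ↔
      ∀ m, 1 ≤ m → m ≤ n / 2 → (1 + (Polynomial.X : Polynomial ℤ) ^ m) ^ (n / (2 * m)) ∣ f := by
  simp_rw [Gpoly_eq_evenCyclotomicProd, evenCyclotomicProd_dvd_iff, Nat.div_div_eq_div_mul]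

/-- `G_n ∣ f` iff `(1+q^m)^{⌊n/(2m)⌋} ∣ f` for all `1 ≤ m ≤ ⌊n/2⌋`. -/
theorem stmt11 (n : ℕ) (hn : 1 ≤ n) (f : Polynomial ℤ) :
    Gpoly n ∣ f ↔
      ∀ m, 1 ≤ m → m ≤ n / 2 → (1 + (Polynomial.X : Polynomial ℤ) ^ m) ^ (n / (2 * m)) ∣ f :=
  stmt11_general n f
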